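/- arXiv:1508.04204 — 4 statements merged into one kernel-verified Lean document; each statement's English description precedes it below -/
import Mathlib

section
/- Let A be an m-th order n-dimensional symmetric tensor with entries in {0,1} (m ≥ 2) that has no zero principal block on any nonempty index set. Then A is {0,1} completely positive if and only if there exists a partition of [n] into nonempty sets V_1,...,V_q such that a_{i_1...i_m} = 1 precisely when all of i_1,...,i_m lie in a common V_j, and a_{i_1...i_m} = 0 otherwise. -/
/-- `A` is a {0,1} completely positive tensor. -/
def IsCP01 (m n : ℕ) (A : (Fin m → Fin n) → ℝ) : Prop :=
  ∃ (q : ℕ) (u : Fin q → Fin n → ℝ),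
    (∀ j k, u j k = 0 ∨ u j k = 1) ∧
    ∀ σ : Fin m → Fin n, A σ = ∑ j, ∏ p, u j (σ p)

lemma prod_indicator01 {m : ℕ} (f : Fin m → ℝ) (hf : ∀ p, f p = 0 ∨ f p = 1) :
    (∏ p, f p) = if ∀ p, f p = 1 then 1 else 0 := by
  classical
  by_cases h : ∀ p, f p = 1
  · simp [h]
  · rw [if_neg h]
    push_neg at h
    obtain ⟨p, hp⟩ := h
    apply Finset.prod_eq_zero (Finset.mem_univ p)
    rcases hf p with h0 | h1
    · exact h0
    · exact absurd h1 hp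

lemma sum_indicator_unique {q : ℕ} (P : Fin q → Prop) [DecidablePred P]
    (huniq : ∀ j j', P j → P j' → j = j') :
    (∑ j, if P j then (1 : ℝ) else 0) = if ∃ j, P j then 1 else 0 := by
  by_cases h : ∃ j, P j
  · obtain ⟨j0, hj0⟩ := h
    rw [if_pos ⟨j0, hj0⟩, Finset.sum_eq_single j0]
    · simp [hj0]
    · intro b _ hb
      rw [if_neg]
      exact fun hPb => hb (huniq b j0 hPb hj0)
    · intro hc; exact absurd (Finset.mem_univ j0) hc
  · rw [if_neg h]
    apply Finset.sum_eq_zero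
    intro j _
    rw [if_neg]
    exact fun hj => h ⟨j, hj⟩

/-- A symmetric `(0,1)` tensor (`m ≥ 2`) with no zero principal block is
{0,1}-cp iff `[n]` partitions into nonempty sets `V_1,...,V_q` such that an entry equals
`1` exactly when all its indices lie in a common `V_j`, and `0` otherwise. -/
theorem stmt7 (m n : ℕ) (hm : 2 ≤ m) (A : (Fin m → Fin n) → ℝ)
    (hsym : ∀ (σ : Fin m → Fin n) (π : Equiv.Perm (Fin m)), A (σ ∘ π) = A σ)
    (h01 : ∀ σ, A σ = 0 ∨ A σ = 1)
    (hnzb : ¬ ∃ I : Finset (Fin n), I.Nonempty ∧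
      ∀ σ : Fin m → Fin n, (∀ p, σ p ∈ I) → A σ = 0) :
    IsCP01 m n A ↔
      ∃ (q : ℕ) (V : Fin q → Finset (Fin n)),
        (∀ j, (V j).Nonempty) ∧
        (∀ i j, i ≠ j → Disjoint (V i) (V j)) ∧
        (Finset.univ.biUnion V = Finset.univ) ∧
        ∀ σ : Fin m → Fin n, A σ = if ∃ j, ∀ p, σ p ∈ V j then 1 else 0 := by
  classical
  have hm0 : 0 < m := by omega
  set p0 : Fin m := ⟨0, hm0⟩ with hp0
  constructor
  · rintro ⟨q, u, hu, hA⟩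
    push_neg at hnzb
    set S : Fin q → Finset (Fin n) := fun j => Finset.univ.filter (fun k => u j k = 1)
      with hS
    have hmemS : ∀ j k, k ∈ S j ↔ u j k = 1 := by
      intro j k; simp [hS]
    -- diagonal entries equal 1
    have hdiag : ∀ i : Fin n, A (fun _ => i) = 1 := by
      intro i
      obtain ⟨σ, hσ, hne⟩ := hnzb {i} (Finset.singleton_nonempty i)
      have hσi : σ = fun _ => i := funext fun p => by simpa using hσ p
      rw [← hσi]
      rcases h01 σ with h | h
      · exact absurd h hne
      · exact h
    -- each i belongs to the support of exactly one u j
    have hexu : ∀ i : Fin n, ∃! j : Fin q, u j i = 1 := by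
      intro i
      have h1 : (∑ j, if u j i = 1 then (1 : ℝ) else 0) = 1 := by
        have := hA (fun _ => i)
        rw [hdiag i] at this
        have heq : ∀ j : Fin q, (∏ _p : Fin m, u j i) = if u j i = 1 then (1:ℝ) else 0 := by
          intro j
          rw [prod_indicator01 (fun _ => u j i) (fun _ => hu j i)]
          by_cases hji : u j i = 1
          · simp [hji]
          · rw [if_neg hji, if_neg (fun hc => hji (hc p0))]
        rw [Finset.sum_congr rfl (fun j _ => heq j)] at this
        exact this.symm
      -- turn the sum into a cardinality
      rw [Finset.sum_boole] at h1
      have hcardn : (Finset.univ.filter (fun j => u j i = 1)).card = 1 := by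
        exact_mod_cast h1
      obtain ⟨a, ha⟩ := Finset.card_eq_one.mp hcardn
      refine ⟨a, ?_, ?_⟩
      · have : a ∈ Finset.univ.filter (fun j => u j i = 1) := by rw [ha]; simp
        simpa using this
      · intro b hb
        have : b ∈ Finset.univ.filter (fun j => u j i = 1) := by simpa using hb
        rw [ha] at this
        simpa using this
    -- key formula for A σ
    have hP : ∀ σ : Fin m → Fin n,
        A σ = if ∃ j, ∀ p, σ p ∈ S j then 1 else 0 := by
      intro σ
      rw [hA σ]
      have heq : ∀ j : Fin q,
          (∏ p, u j (σ p)) = if ∀ p, σ p ∈ S j then (1:ℝ) else 0 := by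
        intro j
        rw [prod_indicator01 (fun p => u j (σ p)) (fun p => hu j (σ p))]
        congr 1
        simp only [eq_iff_iff]
        constructor
        · intro h p; exact (hmemS j (σ p)).mpr (h p)
        · intro h p; exact (hmemS j (σ p)).mp (h p)
      rw [Finset.sum_congr rfl (fun j _ => heq j)]
      apply sum_indicator_unique
      intro j j' hj hj'
      obtain ⟨a, _, hauniq⟩ := hexu (σ p0)
      have h1 := hauniq j ((hmemS j (σ p0)).mp (hj p0))
      have h2 := hauniq j' ((hmemS j' (σ p0)).mp (hj' p0))
      rw [h1, h2]
    -- reindex nonempty supports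
    set T := {j : Fin q // (S j).Nonempty} with hT
    set e : Fin (Fintype.card T) ≃ T := (Fintype.equivFin T).symm with he
    refine ⟨Fintype.card T, fun i => S (e i).1, fun i => (e i).2, ?_, ?_, ?_⟩
    · intro i j hij
      rw [Finset.disjoint_left]
      intro a hai haj
      obtain ⟨b, _, hbuniq⟩ := hexu a
      have h1 := hbuniq (e i).1 ((hmemS _ a).mp hai)
      have h2 := hbuniq (e j).1 ((hmemS _ a).mp haj)
      exact hij (e.injective (Subtype.ext (h1.trans h2.symm)))
    · apply Finset.eq_univ_of_forall
      intro i
      obtain ⟨j, hj, _⟩ := hexu i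
      have hij : i ∈ S j := (hmemS j i).mpr hj
      have hne : (S j).Nonempty := ⟨i, hij⟩
      rw [Finset.mem_biUnion]
      exact ⟨e.symm ⟨j, hne⟩, Finset.mem_univ _, by simpa using hij⟩
    · intro σ
      rw [hP σ]
      congr 1
      simp only [eq_iff_iff]
      constructor
      · rintro ⟨j, hj⟩
        have hne : (S j).Nonempty := ⟨σ p0, hj p0⟩
        exact ⟨e.symm ⟨j, hne⟩, fun p => by simpa using hj p⟩
      · rintro ⟨i, hi⟩
        exact ⟨(e i).1, hi⟩
  · rintro ⟨q, V, hVne, hVdisj, hVcov, hAV⟩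
    refine ⟨q, fun j k => if k ∈ V j then 1 else 0, fun j k => ?_, fun σ => ?_⟩
    · by_cases h : k ∈ V j <;> simp [h]
    · rw [hAV σ]
      have heq : ∀ j : Fin q,
          (∏ p, (if σ p ∈ V j then (1:ℝ) else 0)) = if ∀ p, σ p ∈ V j then (1:ℝ) else 0 := by
        intro j
        rw [prod_indicator01 (fun p => if σ p ∈ V j then (1:ℝ) else 0)
          (fun p => by by_cases h : σ p ∈ V j <;> simp [h])]
        congr 1
        simp only [eq_iff_iff]
        constructor
        · intro h p
          have := h p
          by_contra hc
          rw [if_neg hc] at this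
          norm_num at this
        · intro h p; rw [if_pos (h p)]
      rw [Finset.sum_congr rfl (fun j _ => heq j)]
      rw [sum_indicator_unique]
      intro j j' hj hj'
      by_contra hne
      exact (Finset.disjoint_left.mp (hVdisj j j' hne)) (hj p0) (hj' p0)
end

section
/- Let A be an m-th order n-dimensional symmetric tensor with entries in {0,1} (m ≥ 2) that has no zero principal block. Then A is {0,1} completely positive if and only if A admits a decomposition A = Σ_{j=1}^q u_j^{⊗m} with u_j ∈ {0,1}^n such that U^T U = diag(n_1,...,n_q) for some positive integers n_1,...,n_q with n_1+...+n_q = n, where U = [u_1,...,u_q]. -/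
open Matrix

lemma sum01_eq_one {q : ℕ} (f : Fin q → ℝ) (h01 : ∀ j, f j = 0 ∨ f j = 1)
    (hsum : ∑ j, f j = 1) : ∃! j, f j = 1 := by
  classical
  have hcard : ((Finset.univ.filter (fun j => f j = 1)).card : ℝ) = 1 := by
    have hb : (∑ j, if f j = 1 then (1:ℝ) else 0) = ∑ j, f j :=
      Finset.sum_congr rfl fun j _ => by rcases h01 j with h | h <;> simp [h]
    rw [← Finset.sum_boole, hb, hsum]
  have hc : (Finset.univ.filter (fun j => f j = 1)).card = 1 := by exact_mod_cast hcard
  obtain ⟨j0, hj0⟩ := Finset.card_eq_one.mp hc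
  refine ⟨j0, ?_, ?_⟩
  · have : j0 ∈ Finset.univ.filter (fun j => f j = 1) := by rw [hj0]; simp
    simpa using this
  · intro j hj
    have : j ∈ Finset.univ.filter (fun j => f j = 1) := by simp [hj]
    rw [hj0] at this; simpa using this

lemma sum_subtype_eq {q : ℕ} {M : Type*} [AddCommMonoid M] (P : Fin q → Prop)
    [DecidablePred P] (F : Fin q → M) (hF : ∀ j, ¬ P j → F j = 0)
    (e : Fin (Fintype.card {j // P j}) ≃ {j // P j}) :
    ∑ j', F (e j') = ∑ j, F j := by
  rw [Fintype.sum_equiv e (fun j' => F (e j')) (fun s => F s.1) (fun _ => rfl)]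
  rw [← Finset.sum_subtype (Finset.univ.filter P) (by simp) F]
  exact Finset.sum_filter_of_ne fun x _ hx => by
    by_contra h; exact hx (hF x h)

/-- A symmetric `(0,1)` tensor (`m ≥ 2`) with no zero principal block is
{0,1}-cp iff it admits a decomposition `A = Σ_j u_j^{⊗m}` with `u_j ∈ {0,1}^n` and
`Uᵀ U = diag(n_1,...,n_q)` for positive integers `n_j` summing to `n`. -/
theorem stmt8 (m n : ℕ) (hm : 2 ≤ m) (A : (Fin m → Fin n) → ℝ)
    (hsym : ∀ (σ : Fin m → Fin n) (π : Equiv.Perm (Fin m)), A (σ ∘ π) = A σ)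
    (h01 : ∀ σ, A σ = 0 ∨ A σ = 1)
    (hnzb : ¬ ∃ I : Finset (Fin n), I.Nonempty ∧
      ∀ σ : Fin m → Fin n, (∀ p, σ p ∈ I) → A σ = 0) :
    IsCP01 m n A ↔
      ∃ (q : ℕ) (u : Fin q → Fin n → ℝ) (d : Fin q → ℕ),
        (∀ j k, u j k = 0 ∨ u j k = 1) ∧
        (∀ σ : Fin m → Fin n, A σ = ∑ j, ∏ p, u j (σ p)) ∧
        (∀ j, 0 < d j) ∧ (∑ j, d j = n) ∧
        (Matrix.of fun (i : Fin n) (j : Fin q) => u j i)ᵀ *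
          (Matrix.of fun (i : Fin n) (j : Fin q) => u j i) =
          Matrix.diagonal (fun j => (d j : ℝ)) := by
  classical
  constructor
  · rintro ⟨q, u, hu01, hdec⟩
    -- diagonal entries of A are 1
    have hAii : ∀ i : Fin n, A (fun _ => i) = 1 := by
      intro i
      rcases h01 (fun _ => i) with hA0 | hA1
      · exfalso
        apply hnzb
        refine ⟨{i}, Finset.singleton_nonempty i, ?_⟩
        intro σ hσ
        have hσi : σ = fun _ => i := funext fun p => by simpa using hσ p
        rw [hσi, hA0]
      · exact hA1
    -- each row has a unique column with a 1
    have huniq : ∀ i : Fin n, ∃! j, u j i = 1 := by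
      intro i
      apply sum01_eq_one _ (fun j => hu01 j i)
      have h1 := hdec (fun _ => i)
      rw [hAii i] at h1
      have hprod : ∀ j : Fin q, (∏ _p : Fin m, u j i) = u j i := by
        intro j
        rw [Finset.prod_const, Finset.card_univ, Fintype.card_fin]
        rcases hu01 j i with h | h
        · rw [h, zero_pow (by omega)]
        · rw [h, one_pow]
      exact (Finset.sum_congr rfl fun j _ => hprod j).symm.trans h1.symm
    set P : Fin q → Prop := fun j => ∃ i, u j i = 1 with hP
    have hzero : ∀ j, ¬ P j → ∀ i, u j i = 0 := by
      intro j hj i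
      rcases hu01 j i with h | h
      · exact h
      · exact absurd ⟨i, h⟩ hj
    set e : Fin (Fintype.card {j // P j}) ≃ {j // P j} :=
      (Fintype.equivFin {j // P j}).symm with he
    refine ⟨Fintype.card {j // P j}, fun j' => u (e j'),
      fun j' => (Finset.univ.filter fun i => u (e j') i = 1).card, ?_, ?_, ?_, ?_, ?_⟩
    · intro j k; exact hu01 (e j) k
    · intro σ
      rw [hdec σ]
      exact (sum_subtype_eq P (fun j => ∏ p, u j (σ p))
        (fun j hj => Finset.prod_eq_zero (Finset.mem_univ ⟨0, by omega⟩)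
          (hzero j hj _)) e).symm
    · intro j'
      obtain ⟨i, hi⟩ := (e j').2
      exact Finset.card_pos.mpr ⟨i, by simp [hi]⟩
    · rw [sum_subtype_eq P (fun j => (Finset.univ.filter fun i => u j i = 1).card)
        (fun j hj => by
          rw [Finset.card_eq_zero, Finset.filter_eq_empty_iff]
          intro i _ hi
          exact absurd ⟨i, hi⟩ hj) e]
      have hrow : ∀ i : Fin n, (Finset.univ.filter fun j => u j i = 1).card = 1 := by
        intro i
        obtain ⟨j0, hj0, huq⟩ := huniq i
        apply Finset.card_eq_one.mpr
        refine ⟨j0, ?_⟩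
        ext j
        simp only [Finset.mem_filter, Finset.mem_univ, true_and, Finset.mem_singleton]
        exact ⟨fun h => huq j h, fun h => h ▸ hj0⟩
      calc ∑ j : Fin q, (Finset.univ.filter fun i => u j i = 1).card
          = ∑ j : Fin q, ∑ i : Fin n, (if u j i = 1 then 1 else 0) := by
            exact Finset.sum_congr rfl fun j _ => Finset.card_filter _ _
        _ = ∑ i : Fin n, ∑ j : Fin q, (if u j i = 1 then 1 else 0) := Finset.sum_comm
        _ = ∑ i : Fin n, 1 := by
            refine Finset.sum_congr rfl fun i _ => ?_
            rw [← Finset.card_filter, hrow i]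
        _ = n := by simp
    · ext j1 j2
      simp only [Matrix.mul_apply, Matrix.transpose_apply, Matrix.of_apply]
      by_cases hj : j1 = j2
      · subst hj
        simp only [Matrix.diagonal_apply_eq]
        have hterm : ∀ i, u (e j1) i * u (e j1) i = if u (e j1) i = 1 then (1:ℝ) else 0 := by
          intro i; rcases hu01 (e j1) i with h | h <;> simp [h]
        rw [Finset.sum_congr rfl fun i _ => hterm i, Finset.sum_boole]
      · rw [Matrix.diagonal_apply_ne _ hj]
        apply Finset.sum_eq_zero
        intro i _
        rcases hu01 (e j1) i with h | h
        · rw [h, zero_mul]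
        rcases hu01 (e j2) i with h2 | h2
        · rw [h2, mul_zero]
        exfalso
        obtain ⟨j0, _, huq⟩ := huniq i
        have h12 : (e j1 : Fin q) = (e j2 : Fin q) := (huq _ h).trans (huq _ h2).symm
        exact hj (e.injective (Subtype.ext h12))
  · rintro ⟨q, u, d, h1, h2, _, _, _⟩
    exact ⟨q, u, h1, h2⟩
end

section
/- Every {0,1} completely positive tensor possesses the zero-entry dominance property: if A = Σ_{j=1}^q u_j^{⊗m} with u_j ∈ {0,1}^n and a_{i_1...i_m} = 0, then a_{j_1...j_m} = 0 for every tuple (j_1,...,j_m) whose set of distinct entries contains the set of distinct entries of (i_1,...,i_m). -/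
/-- Every {0,1} completely positive tensor has the zero-entry dominance
property: if `A = Σ_j u_j^{⊗m}` with `u_j ∈ {0,1}^n` and `A σ = 0`, then `A τ = 0` for
every tuple `τ` whose set of distinct entries contains that of `σ`. -/
theorem stmt10 (m n q : ℕ) (u : Fin q → Fin n → ℝ)
    (hu : ∀ j k, u j k = 0 ∨ u j k = 1)
    (A : (Fin m → Fin n) → ℝ)
    (hA : ∀ σ : Fin m → Fin n, A σ = ∑ j, ∏ p, u j (σ p)) :
    ∀ σ τ : Fin m → Fin n, A σ = 0 →
      Finset.image σ Finset.univ ⊆ Finset.image τ Finset.univ → A τ = 0 := by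
  intro σ τ hσ hsub
  rw [hA] at hσ ⊢
  have hnn : ∀ (f : Fin m → Fin n) (j : Fin q), 0 ≤ ∏ p, u j (f p) := by
    intro f j
    exact Finset.prod_nonneg (fun p _ => by rcases hu j (f p) with h | h <;> simp [h])
  have hzero : ∀ j ∈ Finset.univ, (∏ p, u j (σ p)) = 0 :=
    (Finset.sum_eq_zero_iff_of_nonneg (fun j _ => hnn σ j)).mp hσ
  apply Finset.sum_eq_zero
  intro j _
  obtain ⟨p, -, hp⟩ := Finset.prod_eq_zero_iff.mp (hzero j (Finset.mem_univ j))
  have : σ p ∈ Finset.image τ Finset.univ :=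
    hsub (Finset.mem_image.mpr ⟨p, Finset.mem_univ p, rfl⟩)
  obtain ⟨p', -, hp'⟩ := Finset.mem_image.mp this
  exact Finset.prod_eq_zero (Finset.mem_univ p') (by rw [hp']; exact hp)
end

section
/- An m-uniform multi-hypergraph P = (V,E) is a cp multi-hypergraph (i.e., there exists a {0,1} completely positive symmetric tensor A such that a_{i_1...i_m} ≠ 0 exactly when {i_1,...,i_m} ∈ E) if and only if P possesses Property R. -/
lemma exists_fn_of_card {n m : ℕ} (β : Multiset (Fin n)) (h : Multiset.card β = m) :
    ∃ σ : Fin m → Fin n, (↑(List.ofFn σ) : Multiset (Fin n)) = β := by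
  have hl : β.toList.length = m := by simpa using h
  subst hl
  exact ⟨β.toList.get, by rw [List.ofFn_get]; exact β.coe_toList⟩

lemma mem_iff_of_ofFn {n m : ℕ} {σ : Fin m → Fin n} {β : Multiset (Fin n)}
    (h : (↑(List.ofFn σ) : Multiset (Fin n)) = β) (v : Fin n) :
    v ∈ β ↔ ∃ i, σ i = v := by
  rw [← h]; simp [List.mem_ofFn, Set.mem_range]

/-- An `m`-uniform multi-hypergraph is a cp multi-hypergraph (there is a
{0,1}-cp symmetric tensor whose nonzero positions are exactly the edges) iff it has
Property R. -/
theorem stmt11 (m n : ℕ) (hm : 2 ≤ m) (E : Finset (Multiset (Fin n)))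
    (hcard : ∀ e ∈ E, Multiset.card e = m) :
    (∃ A : (Fin m → Fin n) → ℝ,
      (∀ (σ : Fin m → Fin n) (π : Equiv.Perm (Fin m)), A (σ ∘ π) = A σ) ∧
      IsCP01 m n A ∧
      ∀ σ : Fin m → Fin n, A σ ≠ 0 ↔ (↑(List.ofFn σ) : Multiset (Fin n)) ∈ E)
    ↔
    (∀ α ∈ E, ∀ β : Multiset (Fin n),
      Multiset.card β = m → β.toFinset ⊆ α.toFinset → β ∈ E) := by
  constructor
  · rintro ⟨A, -, ⟨q, u, hu01, hA⟩, hsupp⟩ α hα β hβcard hβsub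
    -- representatives
    obtain ⟨σ, hσ⟩ := exists_fn_of_card α (hcard α hα)
    obtain ⟨τ, hτ⟩ := exists_fn_of_card β hβcard
    have hAσ : A σ ≠ 0 := (hsupp σ).mpr (hσ ▸ hα)
    rw [hA] at hAσ
    obtain ⟨j, -, hj⟩ := Finset.exists_ne_zero_of_sum_ne_zero hAσ
    have hj1 : ∀ p, u j (σ p) = 1 := by
      intro p
      rcases hu01 j (σ p) with h0 | h1
      · exact absurd (Finset.prod_eq_zero (Finset.mem_univ p) h0) hj
      · exact h1
    have hτ1 : ∀ p, u j (τ p) = 1 := by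
      intro p
      have hmem : τ p ∈ β := (mem_iff_of_ofFn hτ (τ p)).mpr ⟨p, rfl⟩
      have : τ p ∈ α := Multiset.mem_toFinset.mp
        (hβsub (Multiset.mem_toFinset.mpr hmem))
      obtain ⟨i, hi⟩ := (mem_iff_of_ofFn hσ (τ p)).mp this
      rw [← hi]; exact hj1 i
    have hAτ : A τ ≠ 0 := by
      rw [hA]
      have hpos : (0:ℝ) < ∑ j', ∏ p, u j' (τ p) := by
        have hterm : ∀ j' ∈ Finset.univ, (0:ℝ) ≤ ∏ p, u j' (τ p) := by
          intro j' _
          apply Finset.prod_nonneg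
          intro p _
          rcases hu01 j' (τ p) with h | h <;> simp [h]
        refine Finset.sum_pos' hterm ⟨j, Finset.mem_univ j, ?_⟩
        have : ∏ p, u j (τ p) = 1 := Finset.prod_eq_one fun p _ => hτ1 p
        rw [this]; norm_num
      exact ne_of_gt hpos
    exact hτ ▸ (hsupp τ).mp hAτ
  · intro hR
    -- build A from indicators of edges
    set q := E.card with hq
    set ed : Fin q → Multiset (Fin n) := fun j => (E.equivFin.symm j : Multiset (Fin n)) with hed
    set u : Fin q → Fin n → ℝ := fun j k => if k ∈ ed j then 1 else 0 with hu
    refine ⟨fun σ => ∑ j, ∏ p, u j (σ p), ?_, ⟨q, u, ?_, fun σ => rfl⟩, ?_⟩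
    · intro σ π
      refine Finset.sum_congr rfl fun j _ => ?_
      exact Equiv.prod_comp π (fun p => u j (σ p))
    · intro j k
      by_cases h : k ∈ ed j <;> simp [hu, h]
    · intro σ
      have hterm : ∀ j, (∏ p, u j (σ p) ≠ 0) ↔ ∀ p, σ p ∈ ed j := by
        intro j
        rw [Finset.prod_ne_zero_iff]
        constructor
        · intro h p
          have := h p (Finset.mem_univ p)
          by_contra hc
          simp [hu, hc] at this
        · intro h p _
          simp [hu, h p]
      have key : (∑ j, ∏ p, u j (σ p)) ≠ 0 ↔ ∃ j, ∀ p, σ p ∈ ed j := by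
        constructor
        · intro h
          obtain ⟨j, -, hj⟩ := Finset.exists_ne_zero_of_sum_ne_zero h
          exact ⟨j, (hterm j).mp hj⟩
        · rintro ⟨j, hj⟩
          have hpos : (0:ℝ) < ∑ j', ∏ p, u j' (σ p) := by
            have hnn : ∀ j' ∈ Finset.univ, (0:ℝ) ≤ ∏ p, u j' (σ p) := by
              intro j' _
              apply Finset.prod_nonneg
              intro p _
              by_cases h : σ p ∈ ed j' <;> simp [hu, h]
            refine Finset.sum_pos' hnn ⟨j, Finset.mem_univ j, ?_⟩
            have : ∏ p, u j (σ p) = 1 :=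
              Finset.prod_eq_one fun p _ => by simp [hu, hj p]
            rw [this]; norm_num
          exact ne_of_gt hpos
      rw [key]
      constructor
      · rintro ⟨j, hj⟩
        have hedE : ed j ∈ E := (E.equivFin.symm j).2
        refine hR (ed j) hedE _ (by simp) ?_
        intro v hv
        simp only [Multiset.mem_toFinset, Multiset.mem_coe, List.mem_ofFn] at hv
        obtain ⟨i, rfl⟩ := hv
        exact Multiset.mem_toFinset.mpr (hj i)
      · intro hmem
        refine ⟨E.equivFin ⟨_, hmem⟩, fun p => ?_⟩
        have : ed (E.equivFin ⟨_, hmem⟩) = ↑(List.ofFn σ) := by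
          simp [hed]
        rw [this]
        simp [List.mem_ofFn]
end
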